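/- arXiv:2502.13916 — 4 statements merged into one kernel-verified Lean document; each statement's English description precedes it below -/
import Mathlib

section
/- Let a, b be natural numbers and B a nonempty finite subset of {1, ..., b}. Then the linear set a + B* = {a + k₁b₁ + ... + k_m b_m : k_i ∈ ℕ, B = {b₁,...,b_m}} is a finite union of arithmetic progressions c + d·ℕ where each c ≤ a + b³ and each d ≤ b. More precisely, letting b_m = max B, a + B* = ⋃ {c + b_m·ℕ : c ∈ a + B*, c ≤ a + b³}. -/
/-!
Write `s ∈ B*` as `∑_{x ∈ B} f x • x` and divide each coefficient by `M = max B`: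
`f x = M * q x + r x` with `r x < M`. Then `s = ∑ r x • x + M * ∑ q x • x`; the first sum
is again in `B*` and, since `B` has at most `b` elements each at most `b`, it is at most `b³`.
-/

lemma Finset.card_le_of_forall_mem_Icc {B : Finset ℕ} {b : ℕ} (hsub : ∀ x ∈ B, 1 ≤ x ∧ x ≤ b) :
    B.card ≤ b := by
  calc B.card ≤ (Finset.Icc 1 b).card :=
        Finset.card_le_card fun x hx ↦ Finset.mem_Icc.mpr (hsub x hx)
    _ = b := by simp

lemma exists_add_mul_of_mem_closure_finset {B : Finset ℕ} {s m : ℕ} (hm : 0 < m)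
    (hs : s ∈ AddSubmonoid.closure (B : Set ℕ)) :
    ∃ r ∈ AddSubmonoid.closure (B : Set ℕ), r ≤ ∑ x ∈ B, (m - 1) * x ∧ ∃ k, s = r + m * k := by
  obtain ⟨f, -, rfl⟩ := AddSubmonoid.mem_closure_finset.mp hs
  refine ⟨∑ x ∈ B, (f x % m) • x,
    sum_mem fun x hx ↦ nsmul_mem (AddSubmonoid.subset_closure hx) _, ?_, ∑ x ∈ B, (f x / m) * x, ?_⟩
  · exact Finset.sum_le_sum fun x _ ↦
      Nat.mul_le_mul_right x (Nat.le_sub_one_of_lt (Nat.mod_lt _ hm))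
  · simp only [smul_eq_mul, Finset.mul_sum, ← mul_assoc, ← Finset.sum_add_distrib, ← add_mul,
      Nat.mod_add_div]

lemma add_mul_mem_closure {B : Set ℕ} {r m : ℕ} (hr : r ∈ AddSubmonoid.closure B) (hm : m ∈ B)
    (k : ℕ) :
    r + m * k ∈ AddSubmonoid.closure B :=
  add_mem hr (mul_comm k m ▸ nsmul_mem (AddSubmonoid.subset_closure hm) k)

lemma sum_sub_one_mul_le_cube {B : Finset ℕ} {b m : ℕ} (hsub : ∀ x ∈ B, 1 ≤ x ∧ x ≤ b)
    (hm : m ≤ b) : ∑ x ∈ B, (m - 1) * x ≤ b ^ 3 :=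
  calc ∑ x ∈ B, (m - 1) * x ≤ ∑ _x ∈ B, b * b :=
        Finset.sum_le_sum fun x hx ↦ Nat.mul_le_mul (by omega) (hsub x hx).2
    _ = B.card * (b * b) := by rw [Finset.sum_const, smul_eq_mul]
    _ ≤ b * (b * b) := Nat.mul_le_mul_right _ (Finset.card_le_of_forall_mem_Icc hsub)
    _ = b ^ 3 := by ring

/-- For `B ⊆ [1,b]` nonempty finite, the linear set `a + B*` equals the union
of arithmetic progressions `c + (max B)·ℕ` over those `c ∈ a + B*` with `c ≤ a + b³`. -/
theorem stmt0 (a b : ℕ) (B : Finset ℕ) (hB : B.Nonempty)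
    (hsub : ∀ x ∈ B, 1 ≤ x ∧ x ≤ b) :
    {n : ℕ | ∃ s ∈ AddSubmonoid.closure (B : Set ℕ), n = a + s} =
      ⋃ c ∈ {c : ℕ | (∃ s ∈ AddSubmonoid.closure (B : Set ℕ), c = a + s) ∧ c ≤ a + b ^ 3},
        {x : ℕ | ∃ k : ℕ, x = c + B.max' hB * k} := by
  have hM := B.max'_mem hB
  ext n
  simp only [Set.mem_ofPred_eq, Set.mem_iUnion, exists_prop]
  constructor
  · rintro ⟨s, hs, rfl⟩
    obtain ⟨r, hr, hrle, k, rfl⟩ := exists_add_mul_of_mem_closure_finset (hsub _ hM).1 hs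
    have hr3 := hrle.trans (sum_sub_one_mul_le_cube hsub (hsub _ hM).2)
    exact ⟨a + r, ⟨⟨r, hr, rfl⟩, by omega⟩, k, by ring⟩
  · rintro ⟨c, ⟨⟨s, hs, rfl⟩, -⟩, k, rfl⟩
    exact ⟨s + B.max' hB * k, add_mul_mem_closure hs hM k, by ring⟩
end

section
/- Define sequences H and L by H₁ = U, L₁ = nU, and for i > 1, Hᵢ = U + N·L_{i-1}, Lᵢ = n·Hᵢ^i + L_{i-1}, where n, N, U ∈ ℕ with N, n ≥ 1 and U ≥ 1. Then Hᵢ ≤ (4Nn)^{2·i!} · U^{i!} for all i ≥ 1. -/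
/-- With H₁ = U, L₁ = nU, Hᵢ = U + N·L_{i-1}, Lᵢ = n·Hᵢ^i + L_{i-1},
we have Hᵢ ≤ (4Nn)^{2·i!} · U^{i!}. -/
theorem stmt2 (n N U : ℕ) (hn : 1 ≤ n) (hN : 1 ≤ N) (hU : 1 ≤ U)
    (H L : ℕ → ℕ)
    (hH1 : H 1 = U) (hL1 : L 1 = n * U)
    (hH : ∀ i, 2 ≤ i → H i = U + N * L (i - 1))
    (hL : ∀ i, 2 ≤ i → L i = n * H i ^ i + L (i - 1)) :
    ∀ i, 1 ≤ i → H i ≤ (4 * N * n) ^ (2 * Nat.factorial i) * U ^ Nat.factorial i := by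
  have hHU : ∀ i, 1 ≤ i → U ≤ H i := by
    intro i hi
    rcases eq_or_lt_of_le hi with h | h
    · rw [← h, hH1]
    · rw [hH i h]; exact Nat.le_add_right _ _
  have hLH : ∀ i, 1 ≤ i → L i ≤ 2 * n * H i ^ i := by
    intro i hi
    rcases eq_or_lt_of_le hi with h | h
    · rw [← h, hL1, hH1, pow_one]; nlinarith
    · have h2 : 2 ≤ i := h
      have hLi : L (i - 1) ≤ H i := by
        rw [hH i h2]; nlinarith [Nat.le_add_right U (N * L (i-1)),
          Nat.mul_le_mul_right (L (i-1)) hN]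
      have hsp : H i ≤ H i ^ i := Nat.le_self_pow (by omega) _
      rw [hL i h2]; nlinarith
  intro i hi
  induction i, hi using Nat.le_induction with
  | base =>
      have h1 : 1 ≤ (4 * N * n) ^ (2 * 1) :=
        Nat.one_le_pow _ _ (by positivity)
      rw [hH1]
      simp only [Nat.factorial_one, pow_one]
      nlinarith
  | succ i hi IH =>
      have h2 : 2 ≤ i + 1 := by omega
      have hfac : 1 ≤ Nat.factorial i := Nat.factorial_pos i
      have hB1 : 1 ≤ 4 * N * n := by nlinarith
      rw [hH (i+1) h2, Nat.add_sub_cancel]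
      calc U + N * L i ≤ U + N * (2 * n * H i ^ i) := by
            gcongr; exact hLH i hi
        _ ≤ 4 * N * n * H i ^ i := by
            have h1 : U ≤ H i ^ i := le_trans (hHU i hi) (Nat.le_self_pow (by omega) _)
            nlinarith
        _ ≤ 4 * N * n * ((4 * N * n) ^ (2 * Nat.factorial i) * U ^ Nat.factorial i) ^ i := by
            gcongr
        _ = (4 * N * n) ^ (1 + 2 * (i * Nat.factorial i)) * U ^ (i * Nat.factorial i) := by
            rw [mul_pow, ← pow_mul, ← pow_mul, pow_add, pow_one]
            ring
        _ ≤ (4 * N * n) ^ (2 * Nat.factorial (i+1)) * U ^ Nat.factorial (i+1) := by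
            apply Nat.mul_le_mul
            · apply Nat.pow_le_pow_right hB1
              rw [Nat.factorial_succ]; nlinarith
            · apply Nat.pow_le_pow_right hU
              rw [Nat.factorial_succ]; nlinarith
end

section
/- Suppose a one-turn path scheme in ℕ² admits, from configuration (u₁, c), valid nonnegative paths determined by loop-iteration vectors w + k₁·p and w + k₂·p (k₁ < k₂, w, p ∈ ℕ²). Then for every k with k₁ ≤ k ≤ k₂, the path determined by w + k·p starting at (u₁, c) is also valid (stays nonnegative throughout). -/
/-!
Validity of a path is a finite conjunction of inequalities `0 ≤ x`, one per prefix. Inside a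
block `β^n` the prefix points are affine in the iteration count, so only the two ends of the block
matter. What remains are the prefixes of `α₁`, the prefixes of `α₂` shifted by `n₁ • β₁`, and the
endpoint of the path. For `(n₁, n₂) = w + k • p` each of them is affine in `k`, and the set of `k`
at which an affine vector is nonnegative is an interval.
-/

/-- A sequence of steps `l` stays nonnegative when started at `u`. -/
def stays (u : Fin 2 → ℤ) (l : List (Fin 2 → ℤ)) : Prop :=
  ∀ j ≤ l.length, ∀ i, 0 ≤ u i + (l.take j).sum i

theorem Set.ordConnected_setOf_nonneg_add_nsmul {α : Type*} [AddCommGroup α] [LinearOrder α]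
    [IsOrderedAddMonoid α] (a b : α) : {k : ℕ | 0 ≤ a + k • b}.OrdConnected := by
  refine ⟨fun x hx y hy k hk => ?_⟩
  rcases le_total 0 b with hb | hb
  · exact hx.trans (add_le_add_right (nsmul_le_nsmul_left hb hk.1) a)
  · exact hy.trans (add_le_add_right (nsmul_le_nsmul_left_of_nonpos hb hk.2) a)

theorem Pi.ordConnected_setOf_nonneg_add_nsmul {ι α : Type*} [AddCommGroup α] [LinearOrder α]
    [IsOrderedAddMonoid α] (a b : ι → α) : {k : ℕ | 0 ≤ a + k • b}.OrdConnected := by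
  simp only [Pi.le_def, Pi.add_apply, Pi.smul_apply, Pi.zero_apply, Set.ofPred_forall]
  exact Set.ordConnected_iInter fun i => Set.ordConnected_setOf_nonneg_add_nsmul (a i) (b i)

theorem stays_iff_forall_nonneg {u : Fin 2 → ℤ} {l : List (Fin 2 → ℤ)} :
    stays u l ↔ ∀ j ≤ l.length, 0 ≤ u + (l.take j).sum := by
  simp only [stays, Pi.le_def, Pi.add_apply, Pi.zero_apply]

theorem stays.nonneg {u : Fin 2 → ℤ} {l : List (Fin 2 → ℤ)} (h : stays u l) : 0 ≤ u := by
  simpa using stays_iff_forall_nonneg.1 h 0 (Nat.zero_le _)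

theorem stays.nonneg_add_sum {u : Fin 2 → ℤ} {l : List (Fin 2 → ℤ)} (h : stays u l) :
    0 ≤ u + l.sum := by
  simpa using stays_iff_forall_nonneg.1 h l.length le_rfl

theorem ordConnected_setOf_stays_add_nsmul (a b : Fin 2 → ℤ) (l : List (Fin 2 → ℤ)) :
    {k : ℕ | stays (a + k • b) l}.OrdConnected := by
  simp only [stays_iff_forall_nonneg, Set.ofPred_forall]
  refine Set.ordConnected_iInter fun j => Set.ordConnected_iInter fun _ => ?_
  simpa only [add_right_comm] using Pi.ordConnected_setOf_nonneg_add_nsmul (a + (l.take j).sum) b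

theorem stays_append {u : Fin 2 → ℤ} {X Y : List (Fin 2 → ℤ)} :
    stays u (X ++ Y) ↔ stays u X ∧ stays (u + X.sum) Y := by
  simp only [stays_iff_forall_nonneg, List.length_append]
  constructor
  · intro h
    refine ⟨fun j hj => ?_, fun j hj => ?_⟩
    · simpa [List.take_append_of_le_length hj] using h j (by omega)
    · simpa [List.take_append, List.take_of_length_le, add_assoc] using h (X.length + j) (by omega)
  · rintro ⟨hX, hY⟩ j hj
    rcases le_or_gt j X.length with h | h
    · simpa [List.take_append_of_le_length h] using hX j h
    · obtain ⟨j, rfl⟩ := Nat.exists_eq_add_of_lt h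
      simpa [List.take_append, List.take_of_length_le, add_assoc] using hY (j + 1) (by omega)

theorem stays_replicate {u β : Fin 2 → ℤ} {n : ℕ} :
    stays u (List.replicate n β) ↔ 0 ≤ u ∧ 0 ≤ u + n • β := by
  refine ⟨fun h => ⟨h.nonneg, by simpa using h.nonneg_add_sum⟩, fun ⟨h₀, hn⟩ => ?_⟩
  rw [stays_iff_forall_nonneg]
  intro j hj
  rw [List.length_replicate] at hj
  rw [List.take_replicate, min_eq_left hj, List.sum_replicate]
  exact (Pi.ordConnected_setOf_nonneg_add_nsmul u β).out (by simpa using h₀) hn ⟨Nat.zero_le j, hj⟩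

theorem stays_replicate_append {u β : Fin 2 → ℤ} {n : ℕ} {Y : List (Fin 2 → ℤ)} :
    stays u (List.replicate n β ++ Y) ↔ 0 ≤ u ∧ stays (u + n • β) Y := by
  rw [stays_append, stays_replicate, List.sum_replicate]
  exact ⟨fun ⟨⟨h₀, _⟩, hY⟩ => ⟨h₀, hY⟩, fun ⟨h₀, hY⟩ => ⟨⟨h₀, hY.nonneg⟩, hY⟩⟩

theorem stays_oneTurn_iff {u : Fin 2 → ℤ} {α₁ α₂ : List (Fin 2 → ℤ)} {β₁ β₂ : Fin 2 → ℤ}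
    {n₁ n₂ : ℕ} :
    stays u (α₁ ++ List.replicate n₁ β₁ ++ α₂ ++ List.replicate n₂ β₂) ↔
      stays u α₁ ∧ stays (u + α₁.sum + n₁ • β₁) α₂ ∧
        0 ≤ u + α₁.sum + n₁ • β₁ + α₂.sum + n₂ • β₂ := by
  simp only [List.append_assoc, stays_append (X := α₁), stays_replicate_append,
    stays_append (X := α₂), stays_replicate]
  constructor
  · rintro ⟨h₁, -, h₂, -, h₃⟩
    exact ⟨h₁, h₂, h₃⟩
  · rintro ⟨h₁, h₂, h₃⟩
    exact ⟨h₁, h₁.nonneg_add_sum, h₂, h₂.nonneg_add_sum, h₃⟩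

theorem stmt8_general (α₁ α₂ : List (Fin 2 → ℤ)) (β₁ β₂ : Fin 2 → ℤ)
    (u₁ c : ℤ) (w p : ℕ × ℕ) (k₁ k₂ : ℕ)
    (path : ℕ × ℕ → List (Fin 2 → ℤ))
    (hpath : ∀ nn, path nn = α₁ ++ List.replicate nn.1 β₁ ++ α₂ ++ List.replicate nn.2 β₂)
    (h1 : stays ![u₁, c] (path (w.1 + k₁ * p.1, w.2 + k₁ * p.2)))
    (h2 : stays ![u₁, c] (path (w.1 + k₂ * p.1, w.2 + k₂ * p.2))) :
    ∀ k, k₁ ≤ k → k ≤ k₂ → stays ![u₁, c] (path (w.1 + k * p.1, w.2 + k * p.2)) := by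
  intro k hk₁ hk₂
  simp only [hpath, stays_oneTurn_iff] at h1 h2 ⊢
  set u : Fin 2 → ℤ := ![u₁, c]
  have affine₁ : ∀ k : ℕ, u + α₁.sum + (w.1 + k * p.1) • β₁ =
      (u + α₁.sum + w.1 • β₁) + k • (p.1 • β₁) := fun k => by
    rw [add_smul, mul_smul]; abel
  have affine₂ : ∀ k : ℕ,
      u + α₁.sum + (w.1 + k * p.1) • β₁ + α₂.sum + (w.2 + k * p.2) • β₂ =
        (u + α₁.sum + w.1 • β₁ + α₂.sum + w.2 • β₂) + k • (p.1 • β₁ + p.2 • β₂) := fun k => by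
    rw [add_smul, add_smul, mul_smul, mul_smul, smul_add]; abel
  rw [affine₂, affine₁] at h1 h2 ⊢
  exact ⟨h1.1, (ordConnected_setOf_stays_add_nsmul _ _ α₂).out h1.2.1 h2.2.1 ⟨hk₁, hk₂⟩,
    (Pi.ordConnected_setOf_nonneg_add_nsmul _ _).out h1.2.2 h2.2.2 ⟨hk₁, hk₂⟩⟩

/-- for a one-turn path scheme, if the paths determined by w + k₁·p and w + k₂·p
are valid from (u₁, c), so is the path determined by w + k·p for each k₁ ≤ k ≤ k₂. -/
theorem stmt8 (α₁ α₂ : List (Fin 2 → ℤ)) (β₁ β₂ : Fin 2 → ℤ)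
    (hβ₁ : 0 < β₁ 0 ∧ β₁ 1 < 0) (hβ₂ : β₂ 0 < 0 ∧ 0 < β₂ 1)
    (u₁ c : ℤ) (w p : ℕ × ℕ) (k₁ k₂ : ℕ) (hk : k₁ < k₂)
    (path : ℕ × ℕ → List (Fin 2 → ℤ))
    (hpath : ∀ nn, path nn = α₁ ++ List.replicate nn.1 β₁ ++ α₂ ++ List.replicate nn.2 β₂)
    (h1 : stays ![u₁, c] (path (w.1 + k₁ * p.1, w.2 + k₁ * p.2)))
    (h2 : stays ![u₁, c] (path (w.1 + k₂ * p.1, w.2 + k₂ * p.2))) :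
    ∀ k, k₁ ≤ k → k ≤ k₂ → stays ![u₁, c] (path (w.1 + k * p.1, w.2 + k * p.2)) :=
  stmt8_general α₁ α₂ β₁ β₂ u₁ c w p k₁ k₂ path hpath h1 h2
end

section
/- In a d-dimensional ℤ-VASS (integer VASS, counters may go negative), if there is a ℤ-path from configuration q(w) to q'(w'), then there is one whose multiset of transitions decomposes as: a ℤ-path σ₀ visiting every state used, in which each state occurs at most |Q| times, plus a collection of simple cycles over the used transitions; in particular the effect of σ₀ has norm at most (size of the VASS)², and the effect of each simple cycle has norm at most the size of the VASS. -/
/-!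
Repeatedly cut out of the given path a nonempty closed segment all of whose states still occur
elsewhere on the path, and split each segment cut out into simple cycles (a closed walk with a
repeated transition `t` splits at the two copies of `t` into two shorter closed walks). Cutting
preserves the set of visited states, so every cycle is anchored on what remains, `σ₀`. Once no such
segment is left, each state `r` occurs in `σ₀` at most as often as `σ₀` has distinct states: between
two consecutive visits of `r` lies a closed segment with a state occurring nowhere else. Hence every
transition occurs in `σ₀` at most `|T| ≤ M` times, giving the bound `M²`, while a simple cycle uses
each transition of `T` at most once.
-/

/-- `IsWalk q l q'`: the list of transitions `l` forms a walk from state `q` to state `q'`. -/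
def IsWalk {Q : Type} {d : ℕ} (q : Q) : List (Q × (Fin d → ℤ) × Q) → Q → Prop
  | [], q' => q = q'
  | t :: l, q' => t.1 = q ∧ IsWalk t.2.2 l q'

open List

abbrev Transition (Q : Type) (d : ℕ) := Q × (Fin d → ℤ) × Q

theorem List.exists_eq_append_cons_append_cons_of_not_nodup {α : Type*} :
    ∀ {l : List α}, ¬ l.Nodup → ∃ x u v w, l = u ++ x :: (v ++ x :: w)
  | [], h => absurd nodup_nil h
  | a :: l, h => by
    by_cases ha : a ∈ l
    · obtain ⟨v, w, rfl⟩ := append_of_mem ha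
      exact ⟨a, [], v, w, rfl⟩
    · obtain ⟨x, u, v, w, rfl⟩ :=
        exists_eq_append_cons_append_cons_of_not_nodup fun hl => h (nodup_cons.2 ⟨ha, hl⟩)
      exact ⟨x, a :: u, v, w, rfl⟩

theorem List.sum_map_flatMap {α β M : Type*} [AddCommMonoid M] (f : α → List β) (g : β → M)
    (l : List α) : ((l.flatMap f).map g).sum = (l.map fun a => ((f a).map g).sum).sum := by
  simp [flatMap_def, sum_flatten, map_flatten, Function.comp_def]

theorem List.sum_natAbs_sum_le {α ι : Type*} [BEq α] [LawfulBEq α] [Fintype ι] {l : List α}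
    {s : Finset α} {k : ℕ} (v : α → ι → ℤ) (hs : ∀ x ∈ l, x ∈ s) (hk : ∀ x, l.count x ≤ k) :
    ∑ i, ((l.map v).sum i).natAbs ≤ k * ∑ x ∈ s, ∑ i, (v x i).natAbs := by
  classical
  obtain rfl : ‹BEq α› = instBEqOfDecidableEq := lawful_beq_subsingleton _ _
  set norm : (ι → ℤ) → ℕ := fun u => ∑ i, (u i).natAbs
  have hsub : norm (l.map v).sum ≤ ((l.map v).map norm).sum :=
    le_sum_of_subadditive norm (by simp [norm])
      (fun a b => by simpa [norm, Finset.sum_add_distrib] using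
        Finset.sum_le_sum fun i _ => Int.natAbs_add_le (a i) (b i)) _
  calc norm (l.map v).sum ≤ (l.map (norm ∘ v)).sum := by simpa using hsub
    _ = ∑ x ∈ l.toFinset, l.count x * norm (v x) := by simp [Finset.sum_list_map_count]
    _ ≤ ∑ x ∈ l.toFinset, k * norm (v x) := Finset.sum_le_sum fun x _ => by gcongr; exact hk x
    _ ≤ ∑ x ∈ s, k * norm (v x) :=
      Finset.sum_le_sum_of_subset fun x hx => hs x (mem_toFinset.1 hx)
    _ = k * ∑ x ∈ s, ∑ i, (v x i).natAbs := (Finset.mul_sum ..).symm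

section Walks

variable {Q : Type} {d : ℕ}

@[simp] theorem isWalk_nil {q q' : Q} : IsWalk (d := d) q [] q' ↔ q = q' := Iff.rfl

@[simp] theorem isWalk_cons {q q' : Q} {t : Transition Q d} {l : List (Transition Q d)} :
    IsWalk q (t :: l) q' ↔ t.1 = q ∧ IsWalk t.2.2 l q' := Iff.rfl

theorem isWalk_append_iff {a b : List (Transition Q d)} {q q' : Q} :
    IsWalk q (a ++ b) q' ↔ ∃ m, IsWalk q a m ∧ IsWalk m b q' := by
  induction a generalizing q with
  | nil => simp
  | cons t a ih => simp [ih, and_assoc]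

theorem IsWalk.target_unique {l : List (Transition Q d)} {q x y : Q} (hx : IsWalk q l x)
    (hy : IsWalk q l y) : x = y := by
  induction l generalizing q with
  | nil => exact hx.symm.trans hy
  | cons t l ih => exact ih hx.2 hy.2

theorem IsWalk.mem_sources {l : List (Transition Q d)} {q q' : Q} (hl : l ≠ [])
    (h : IsWalk q l q') : q ∈ l.map Prod.fst := by
  obtain _ | ⟨t, l⟩ := l
  · exact absurd rfl hl
  · exact mem_cons.2 (Or.inl h.1.symm)

theorem IsWalk.cons_segment {a b c : List (Transition Q d)} {t t' : Transition Q d} {q q' : Q}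
    (h : IsWalk q (a ++ t :: b ++ t' :: c) q') : IsWalk t.1 (t :: b) t'.1 := by
  obtain ⟨x, -, hx⟩ := isWalk_append_iff.1 (append_assoc a _ _ ▸ h)
  obtain ⟨y, hb, hc⟩ := isWalk_append_iff.1 hx
  exact (isWalk_cons.1 hb).1 ▸ (isWalk_cons.1 hc).1 ▸ hb

theorem IsWalk.excise {a b c : List (Transition Q d)} {q q' s : Q}
    (h : IsWalk q (a ++ b ++ c) q') (hb : b ≠ []) (hs : IsWalk s b s) : IsWalk q (a ++ c) q' := by
  obtain ⟨y, hab, hc⟩ := isWalk_append_iff.1 h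
  obtain ⟨x, ha, hb'⟩ := isWalk_append_iff.1 hab
  obtain _ | ⟨t, b⟩ := b
  · exact absurd rfl hb
  have hxs : x = s := hb'.1.symm.trans hs.1
  subst hxs
  exact isWalk_append_iff.2 ⟨x, ha, hs.target_unique hb' ▸ hc⟩

def IsSimpleCycle (c : Q × List (Transition Q d)) : Prop :=
  c.2 ≠ [] ∧ IsWalk c.1 c.2 c.1 ∧ c.2.Nodup

theorem exists_simpleCycles_perm {b : List (Transition Q d)} {s : Q} (hb : b ≠ [])
    (hs : IsWalk s b s) :
    ∃ cycs : List (Q × List (Transition Q d)),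
      (∀ c ∈ cycs, IsSimpleCycle c) ∧ b ~ cycs.flatMap Prod.snd := by
  by_cases hnd : b.Nodup
  · exact ⟨[(s, b)], by simpa [IsSimpleCycle] using ⟨hb, hs, hnd⟩, by simp⟩
  obtain ⟨t, u, v, w, rfl⟩ := exists_eq_append_cons_append_cons_of_not_nodup hnd
  have hloop : IsWalk t.1 (t :: v) t.1 := IsWalk.cons_segment (c := w) (by simpa using hs)
  have hrest : IsWalk s (u ++ t :: w) s := by
    simpa using IsWalk.excise (a := u) (by simpa using hs) (cons_ne_nil _ _) hloop
  obtain ⟨cycs₁, hcycs₁, hperm₁⟩ := exists_simpleCycles_perm (cons_ne_nil _ _) hloop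
  obtain ⟨cycs₂, hcycs₂, hperm₂⟩ := exists_simpleCycles_perm (by simp) hrest
  refine ⟨cycs₁ ++ cycs₂, fun c hc => (mem_append.1 hc).elim (hcycs₁ c) (hcycs₂ c), ?_⟩
  calc u ++ t :: (v ++ t :: w) ~ (t :: v) ++ (u ++ t :: w) := by
        simpa using (perm_append_comm (l₁ := u) (l₂ := t :: v)).append_right (t :: w)
    _ ~ cycs₁.flatMap Prod.snd ++ cycs₂.flatMap Prod.snd := hperm₁.append hperm₂
    _ = (cycs₁ ++ cycs₂).flatMap Prod.snd := (flatMap_append ..).symm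
termination_by b.length
decreasing_by all_goals subst_vars; simp <;> omega

def HasRedundantLoop (l : List (Transition Q d)) : Prop :=
  ∃ a b c s, l = a ++ b ++ c ∧ b ≠ [] ∧ IsWalk s b s ∧ b.map Prod.fst ⊆ (a ++ c).map Prod.fst

theorem HasRedundantLoop.append_left {l : List (Transition Q d)} (h : HasRedundantLoop l)
    (p : List (Transition Q d)) : HasRedundantLoop (p ++ l) := by
  obtain ⟨a, b, c, s, rfl, hb, hs, hsub⟩ := h
  refine ⟨p ++ a, b, c, s, by simp, hb, hs, Subset.trans hsub (map_subset _ ?_)⟩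
  rw [append_assoc]
  exact subset_append_right _ _

theorem exists_mem_sources_not_mem_of_not_hasRedundantLoop {t t' : Transition Q d}
    {m c : List (Transition Q d)} {s s' : Q} (hw : IsWalk s (t :: (m ++ t' :: c)) s')
    (htt' : t.1 = t'.1) (hirr : ¬ HasRedundantLoop (t :: (m ++ t' :: c))) :
    ∃ x ∈ (t :: m).map Prod.fst, x ∉ (t' :: c).map Prod.fst := by
  have hloop : IsWalk t.1 (t :: m) t.1 := by
    nth_rw 2 [htt']
    exact IsWalk.cons_segment (a := []) (c := c) (by simpa using hw)
  by_contra! hsub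
  exact hirr ⟨[], t :: m, t' :: c, t.1, by simp, cons_ne_nil _ _, hloop,
    fun y hy => by simpa using hsub y hy⟩

theorem count_sources_le_card_of_not_hasRedundantLoop [DecidableEq Q] :
    ∀ {l : List (Transition Q d)} {s s' : Q}, IsWalk s l s' → ¬ HasRedundantLoop l → ∀ r,
      (l.map Prod.fst).count r ≤ (l.map Prod.fst).toFinset.card
  | [], _, _, _, _, r => by simp
  | t :: l, s, s', hw, hirr, r => by
    have hirr' (p : List (Transition Q d)) (l' : List (Transition Q d)) (hl : p ++ l' = t :: l) :
        ¬ HasRedundantLoop l' := fun h => hirr (hl ▸ h.append_left p)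
    by_cases ht : t.1 = r
    swap
    · have ih := count_sources_le_card_of_not_hasRedundantLoop hw.2 (hirr' [t] l rfl) r
      calc ((t :: l).map Prod.fst).count r = (l.map Prod.fst).count r := by simp [ht]
        _ ≤ (l.map Prod.fst).toFinset.card := ih
        _ ≤ ((t :: l).map Prod.fst).toFinset.card := Finset.card_le_card (by simp)
    by_cases hr : r ∈ l.map Prod.fst
    swap
    · calc ((t :: l).map Prod.fst).count r = 1 := by simp [ht, count_eq_zero.2 hr]
        _ ≤ _ := Finset.card_pos.2 ⟨r, by simp [← ht]⟩
    obtain ⟨t', hfind⟩ : ∃ t', l.find? (fun y => y.1 == r) = some t' := by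
      obtain ⟨y, hy, rfl⟩ := mem_map.1 hr
      exact Option.isSome_iff_exists.1 (find?_isSome.2 ⟨y, hy, by simp⟩)
    obtain ⟨ht', m, c, rfl, hm⟩ := find?_eq_some_iff_append.1 hfind
    simp only [beq_iff_eq] at ht'
    obtain ⟨x, hx, hxc⟩ :=
      exists_mem_sources_not_mem_of_not_hasRedundantLoop hw (ht.trans ht'.symm) hirr
    obtain ⟨y, -, hy⟩ :=
      isWalk_append_iff.1 (by simpa using hw : IsWalk s ((t :: m) ++ t' :: c) s')
    have ih := count_sources_le_card_of_not_hasRedundantLoop hy (hirr' (t :: m) _ (by simp)) r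
    have hm : r ∉ m.map Prod.fst := fun h => by
      obtain ⟨y, hy, hyt⟩ := mem_map.1 h
      simpa [hyt] using hm y hy
    calc ((t :: (m ++ t' :: c)).map Prod.fst).count r = ((t' :: c).map Prod.fst).count r + 1 := by
          simp [ht, ht', count_eq_zero.2 hm]
      _ ≤ ((t' :: c).map Prod.fst).toFinset.card + 1 := by omega
      _ = (insert x ((t' :: c).map Prod.fst).toFinset).card := by
          rw [Finset.card_insert_of_notMem (by simpa using hxc)]
      _ ≤ ((t :: (m ++ t' :: c)).map Prod.fst).toFinset.card :=
          Finset.card_le_card <| Finset.insert_subset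
            (mem_toFinset.2 ((((sublist_append_left m _).cons_cons t).map _).subset hx))
            fun y hy => mem_toFinset.2 ((((sublist_append_right m _).cons t).map _).subset
              (mem_toFinset.1 hy))
termination_by l => l.length

theorem exists_irredundant_walk_perm {l : List (Transition Q d)} {q q' : Q}
    (hw : IsWalk q l q') :
    ∃ (σ₀ : List (Transition Q d)) (cycs : List (Q × List (Transition Q d))),
      IsWalk q σ₀ q' ∧ ¬ HasRedundantLoop σ₀ ∧ l.map Prod.fst ⊆ σ₀.map Prod.fst ∧
      (∀ c ∈ cycs, IsSimpleCycle c) ∧ l ~ σ₀ ++ cycs.flatMap Prod.snd := by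
  by_cases hred : HasRedundantLoop l
  swap
  · exact ⟨l, [], hw, hred, Subset.refl _, by simp, by simp⟩
  obtain ⟨a, b, c, s, rfl, hb, hs, hsub⟩ := hred
  obtain ⟨σ₀, cycs₁, hσ, hirr, hsrc, hcycs₁, hperm₁⟩ :=
    exists_irredundant_walk_perm (hw.excise hb hs)
  obtain ⟨cycs₂, hcycs₂, hperm₂⟩ := exists_simpleCycles_perm hb hs
  refine ⟨σ₀, cycs₁ ++ cycs₂, hσ, hirr, ?_,
    fun c hc => (mem_append.1 hc).elim (hcycs₁ c) (hcycs₂ c), ?_⟩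
  · intro y hy
    simp only [map_append, mem_append] at hy
    rcases hy with (hy | hy) | hy
    · exact hsrc (by simp [hy])
    · exact hsrc (hsub hy)
    · exact hsrc (by simp [hy])
  · calc a ++ b ++ c ~ (a ++ c) ++ b := by simpa using (perm_append_comm (l₁ := b)).append_left a
      _ ~ (σ₀ ++ cycs₁.flatMap Prod.snd) ++ cycs₂.flatMap Prod.snd := hperm₁.append hperm₂
      _ = σ₀ ++ (cycs₁ ++ cycs₂).flatMap Prod.snd := by simp
termination_by l.length
decreasing_by all_goals subst_vars; simp [length_pos_iff.2 hb]

end Walks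

/-- any ℤ-path from q(w) to q'(w') can be replaced by one decomposing into a
ℤ-path σ₀ (each state occurring at most |Q| times, visiting all states used) plus simple
cycles anchored at states visited by σ₀; so ‖eff σ₀‖₁ ≤ M² and each cycle effect has
1-norm ≤ M, where M is the size of the ℤ-VASS. -/
theorem stmt19 (Q : Type) [DecidableEq Q] [Fintype Q] (d : ℕ)
    (T : Finset (Q × (Fin d → ℤ) × Q)) (M : ℕ)
    (hM : M = ∑ t ∈ T, (1 + ∑ i, (t.2.1 i).natAbs))
    (q q' : Q) (w w' : Fin d → ℤ)
    (h : ∃ l : List (Q × (Fin d → ℤ) × Q),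
      IsWalk q l q' ∧ (∀ t ∈ l, t ∈ T) ∧ w + (l.map (fun t : Q × (Fin d → ℤ) × Q => t.2.1)).sum = w') :
    ∃ (σ₀ : List (Q × (Fin d → ℤ) × Q)) (cycs : List (Q × List (Q × (Fin d → ℤ) × Q))),
      IsWalk q σ₀ q' ∧ (∀ t ∈ σ₀, t ∈ T) ∧
      (∀ c ∈ cycs, c.2 ≠ [] ∧ IsWalk c.1 c.2 c.1 ∧ (∀ t ∈ c.2, t ∈ T) ∧ c.2.Nodup) ∧
      (∀ c ∈ cycs, c.1 = q ∨ ∃ t ∈ σ₀, t.1 = c.1 ∨ t.2.2 = c.1) ∧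
      (∀ r : Q, (σ₀.map (fun t : Q × (Fin d → ℤ) × Q => t.1)).count r ≤ Fintype.card Q) ∧
      w + (σ₀.map (fun t : Q × (Fin d → ℤ) × Q => t.2.1)).sum
        + (cycs.map (fun c => (c.2.map (fun t : Q × (Fin d → ℤ) × Q => t.2.1)).sum)).sum = w' ∧
      (∑ i, (((σ₀.map (fun t : Q × (Fin d → ℤ) × Q => t.2.1)).sum) i).natAbs) ≤ M ^ 2 ∧
      ∀ c ∈ cycs, (∑ i, (((c.2.map (fun t : Q × (Fin d → ℤ) × Q => t.2.1)).sum) i).natAbs) ≤ M := by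
  obtain ⟨l, hl, hlT, hll⟩ := h
  obtain ⟨σ₀, cycs, hσ, hirr, hsrc, hcycs, hperm⟩ := exists_irredundant_walk_perm hl
  have hσT : ∀ t ∈ σ₀, t ∈ T := fun t ht => hlT t (hperm.symm.subset (mem_append_left _ ht))
  have hcycl : ∀ c ∈ cycs, c.2 ⊆ l := fun c hc t ht =>
    hperm.symm.subset (mem_append_right _ (mem_flatMap_of_mem hc ht))
  have hcount := count_sources_le_card_of_not_hasRedundantLoop hσ hirr
  have hM' : T.card + ∑ t ∈ T, ∑ i, (t.2.1 i).natAbs = M := by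
    simp [hM, Finset.sum_add_distrib]
  have hcard : (σ₀.map Prod.fst).toFinset.card ≤ M := by
    have hsub : (σ₀.map Prod.fst).toFinset ⊆ T.image Prod.fst := fun r hr => by
      obtain ⟨t, ht, rfl⟩ := mem_map.1 (mem_toFinset.1 hr)
      exact Finset.mem_image_of_mem _ (hσT t ht)
    exact (Finset.card_le_card hsub).trans (Finset.card_image_le.trans (by omega))
  refine ⟨σ₀, cycs, hσ, hσT, fun c hc => ⟨(hcycs c hc).1, (hcycs c hc).2.1,
    fun t ht => hlT t (hcycl c hc ht), (hcycs c hc).2.2⟩, fun c hc => ?_,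
    fun r => (hcount r).trans (Finset.card_le_univ _), ?_, ?_, fun c hc => ?_⟩
  · obtain ⟨t, ht, hts⟩ := mem_map.1 <| hsrc <| map_subset _ (hcycl c hc) <|
      (hcycs c hc).2.1.mem_sources (hcycs c hc).1
    exact Or.inr ⟨t, ht, Or.inl hts⟩
  · rw [add_assoc, ← hll, (hperm.map _).sum_eq, map_append, sum_append, sum_map_flatMap]
  · calc _ ≤ (σ₀.map Prod.fst).toFinset.card * ∑ t ∈ T, ∑ i, (t.2.1 i).natAbs :=
          sum_natAbs_sum_le _ hσT fun t => count_le_count_map.trans (hcount t.1)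
      _ ≤ M ^ 2 := by rw [sq]; exact Nat.mul_le_mul hcard (by omega)
  · calc _ ≤ 1 * ∑ t ∈ T, ∑ i, (t.2.1 i).natAbs :=
          sum_natAbs_sum_le _ (fun t ht => hlT t (hcycl c hc ht))
            (nodup_iff_count_le_one.1 (hcycs c hc).2.2)
      _ ≤ M := by omega
end
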